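/- Under the DCSBM population setup with simple eigenvalues of D̃P̃D̃, the row-normalized matrix X* satisfies: for any two nodes i and j with g_i ≠ g_j, the i-th and j-th rows of X* are different; combined with equality of rows within each community, X* has exactly K distinct rows. -/

import Mathlib

/-!
Every row of `X` is a positive multiple of the row of `[λ₁a₁, …, λ_Ka_K, 0]` indexed by the
node's community, so row normalization removes the node-specific factor. The `a_j` are
eigenvectors of `D̃P̃D̃` for distinct eigenvalues, hence linearly independent, and all `λ_j` are
nonzero because `D̃P̃D̃` is nonsingular; so the `K` community rows are linearly independent, in
particular pairwise non-proportional, and their normalizations are distinct.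
-/

open Matrix BigOperators MeasureTheory ProbabilityTheory

noncomputable section

namespace DCSBM

variable {n K : ℕ}

/-- The `n × K` membership matrix `Z` with `Z i k = 1` iff node `i` is in community `k`. -/
def Zmat (g : Fin n → Fin K) : Matrix (Fin n) (Fin K) ℝ :=
  Matrix.of fun i k => if g i = k then (1 : ℝ) else 0

/-- The population expectation matrix `Ω = Θ Z P Zᵀ Θ`. -/
def Omega (g : Fin n → Fin K) (θ : Fin n → ℝ) (P : Matrix (Fin K) (Fin K) ℝ) :
    Matrix (Fin n) (Fin n) ℝ :=
  Matrix.diagonal θ * Zmat g * P * (Zmat g)ᵀ * Matrix.diagonal θ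

/-- Expected degrees `𝒟_ii = ∑_j Ω_ij`. -/
def Dvec (g : Fin n → Fin K) (θ : Fin n → ℝ) (P : Matrix (Fin K) (Fin K) ℝ) : Fin n → ℝ :=
  fun i => ∑ j, Omega g θ P i j

/-- The regularized population Laplacian `𝓛_δ = 𝒟_δ^{-1/2} Ω 𝒟_δ^{-1/2}`. -/
def Ldelta (g : Fin n → Fin K) (θ : Fin n → ℝ) (P : Matrix (Fin K) (Fin K) ℝ) (δ d : ℝ) :
    Matrix (Fin n) (Fin n) ℝ :=
  Matrix.diagonal (fun i => (Real.sqrt (Dvec g θ P i + δ * d))⁻¹) * Omega g θ P *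
    Matrix.diagonal (fun i => (Real.sqrt (Dvec g θ P i + δ * d))⁻¹)

/-- `θ^δ_i = θ_i 𝒟_ii / (𝒟_ii + δ d)`. -/
def thetaDelta (g : Fin n → Fin K) (θ : Fin n → ℝ) (P : Matrix (Fin K) (Fin K) ℝ) (δ d : ℝ) :
    Fin n → ℝ :=
  fun i => θ i * Dvec g θ P i / (Dvec g θ P i + δ * d)

/-- `θ̃_i = √(θ^δ_i)`. -/
def thetaTilde (g : Fin n → Fin K) (θ : Fin n → ℝ) (P : Matrix (Fin K) (Fin K) ℝ) (δ d : ℝ) :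
    Fin n → ℝ :=
  fun i => Real.sqrt (thetaDelta g θ P δ d i)

/-- `θ̃^{(k)}_i = θ̃_i · 1{g i = k}`. -/
def thetaTildeK (g : Fin n → Fin K) (θ : Fin n → ℝ) (P : Matrix (Fin K) (Fin K) ℝ) (δ d : ℝ)
    (k : Fin K) : Fin n → ℝ :=
  fun i => if g i = k then thetaTilde g θ P δ d i else 0

/-- Euclidean norm of a vector. -/
def normE {m : ℕ} (v : Fin m → ℝ) : ℝ := Real.sqrt (∑ i, v i ^ 2)

/-- Row sums of `Q = P Zᵀ Θ`, the diagonal entries of `D_P`. -/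
def DPvec (g : Fin n → Fin K) (θ : Fin n → ℝ) (P : Matrix (Fin K) (Fin K) ℝ) : Fin K → ℝ :=
  fun k => ∑ j, (P * (Zmat g)ᵀ * Matrix.diagonal θ) k j

/-- `P̃ = D_P^{-1/2} P D_P^{-1/2}`. -/
def Ptilde (g : Fin n → Fin K) (θ : Fin n → ℝ) (P : Matrix (Fin K) (Fin K) ℝ) :
    Matrix (Fin K) (Fin K) ℝ :=
  Matrix.diagonal (fun k => (Real.sqrt (DPvec g θ P k))⁻¹) * P *
    Matrix.diagonal (fun k => (Real.sqrt (DPvec g θ P k))⁻¹)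

/-- `D̃ = diag(‖θ̃^{(k)}‖ / ‖θ̃‖)`. -/
def Dtilde (g : Fin n → Fin K) (θ : Fin n → ℝ) (P : Matrix (Fin K) (Fin K) ℝ) (δ d : ℝ) :
    Matrix (Fin K) (Fin K) ℝ :=
  Matrix.diagonal fun k => normE (thetaTildeK g θ P δ d k) / normE (thetaTilde g θ P δ d)

/-- `Γ̃`, the `n × K` matrix whose `k`-th column is `θ̃^{(k)} / ‖θ̃^{(k)}‖`. -/
def Gamma (g : Fin n → Fin K) (θ : Fin n → ℝ) (P : Matrix (Fin K) (Fin K) ℝ) (δ d : ℝ) :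
    Matrix (Fin n) (Fin K) ℝ :=
  Matrix.of fun i k => thetaTildeK g θ P δ d k i / normE (thetaTildeK g θ P δ d k)

open Function

lemma normE_zero {m : ℕ} : normE (0 : Fin m → ℝ) = 0 := by
  simp [normE]

lemma normE_pos {m : ℕ} {v : Fin m → ℝ} (hv : v ≠ 0) : 0 < normE v := by
  obtain ⟨i, hi⟩ := Function.ne_iff.1 hv
  exact Real.sqrt_pos.2 (Finset.sum_pos' (fun j _ => sq_nonneg _)
    ⟨i, Finset.mem_univ i, pow_pos (abs_pos.2 hi) 2 |>.trans_eq (sq_abs _)⟩)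

lemma normE_smul_of_nonneg {m : ℕ} {c : ℝ} (hc : 0 ≤ c) (v : Fin m → ℝ) :
    normE (c • v) = c * normE v := by
  simp only [normE, Pi.smul_apply, smul_eq_mul, mul_pow, ← Finset.mul_sum]
  rw [Real.sqrt_mul (sq_nonneg c), Real.sqrt_sq hc]

lemma div_normE_smul_of_pos {m : ℕ} {c : ℝ} (hc : 0 < c) (v : Fin m → ℝ) :
    (fun j => (c • v) j / normE (c • v)) = (normE v)⁻¹ • v := by
  funext j
  rw [normE_smul_of_nonneg hc.le, Pi.smul_apply, smul_eq_mul, mul_div_mul_left _ _ hc.ne',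
    Pi.smul_apply, smul_eq_mul, div_eq_inv_mul]

lemma injective_inv_normE_smul {ι : Type*} {m : ℕ} {w : ι → Fin m → ℝ}
    (hw : LinearIndependent ℝ w) : Injective fun k => (normE (w k))⁻¹ • w k :=
  (hw.units_smul fun k => Units.mk0 _ (inv_ne_zero (normE_pos (hw.ne_zero k)).ne')).injective

section LinearAlgebra

variable {R m ι : Type*} [Field R] [Fintype m] [DecidableEq m]

lemma linearIndependent_of_mulVec_eq_smul (B : Matrix m m R) {μ : ι → R} (hμ : Injective μ)
    {v : ι → m → R} (hv : ∀ i, v i ≠ 0) (hBv : ∀ i, B *ᵥ v i = μ i • v i) :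
    LinearIndependent R v :=
  Module.End.eigenvectors_linearIndependent' (Matrix.toLin' B) μ hμ v fun i =>
    ⟨Module.End.mem_eigenspace_iff.2 (by rw [Matrix.toLin'_apply, hBv]), hv i⟩

lemma eigenvalue_ne_zero_of_det_ne_zero {B : Matrix m m R} (hB : B.det ≠ 0) {v : m → R}
    {μ : R} (hv : v ≠ 0) (hBv : B *ᵥ v = μ • v) : μ ≠ 0 := by
  rintro rfl
  exact hv (Matrix.eq_zero_of_mulVec_eq_zero hB (by rw [hBv, zero_smul]))

lemma linearIndependent_transpose_mul_diagonal {v : m → m → R} (hv : LinearIndependent R v)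
    {μ : m → R} (hμ : ∀ j, μ j ≠ 0) : LinearIndependent R fun k j => v j k * μ j := by
  have hunit : IsUnit ((Matrix.of v)ᵀ * diagonal μ) :=
    ((isUnit_transpose _).2 (linearIndependent_rows_iff_isUnit.1 hv)).mul
      (isUnit_diagonal.2 (Pi.isUnit_iff.2 fun j => (hμ j).isUnit))
  convert linearIndependent_rows_iff_isUnit.2 hunit using 1
  funext k j
  simp [Matrix.row, Matrix.mul_diagonal]

end LinearAlgebra

lemma exists_pos_of_det_ne_zero {P : Matrix (Fin K) (Fin K) ℝ} (hPnn : ∀ k l, 0 ≤ P k l)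
    (hPdet : P.det ≠ 0) (k : Fin K) : ∃ l, 0 < P k l := by
  by_contra! h
  exact hPdet (Matrix.det_eq_zero_of_row_eq_zero k fun l => le_antisymm (h l) (hPnn k l))

lemma Omega_apply (g : Fin n → Fin K) (θ : Fin n → ℝ) (P : Matrix (Fin K) (Fin K) ℝ)
    (i j : Fin n) : Omega g θ P i j = θ i * P (g i) (g j) * θ j := by
  rw [Omega, Matrix.mul_diagonal, Matrix.mul_assoc (diagonal θ * Zmat g),
    Matrix.mul_assoc (diagonal θ), Matrix.diagonal_mul]
  simp [Zmat, Matrix.mul_apply]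

lemma DPvec_apply (g : Fin n → Fin K) (θ : Fin n → ℝ) (P : Matrix (Fin K) (Fin K) ℝ)
    (k : Fin K) : DPvec g θ P k = ∑ j, P k (g j) * θ j := by
  simp only [DPvec, Matrix.mul_diagonal]
  simp [Zmat, Matrix.mul_apply]

lemma Dvec_eq_mul_DPvec (g : Fin n → Fin K) (θ : Fin n → ℝ) (P : Matrix (Fin K) (Fin K) ℝ)
    (i : Fin n) : Dvec g θ P i = θ i * DPvec g θ P (g i) := by
  simp only [Dvec, Omega_apply, DPvec_apply, Finset.mul_sum, mul_assoc]

lemma Gamma_mulVec_apply (g : Fin n → Fin K) (θ : Fin n → ℝ) (P : Matrix (Fin K) (Fin K) ℝ)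
    (δ d : ℝ) (b : Fin K → ℝ) (i : Fin n) :
    (Gamma g θ P δ d *ᵥ b) i =
      thetaTilde g θ P δ d i / normE (thetaTildeK g θ P δ d (g i)) * b (g i) := by
  simp [Matrix.mulVec, dotProduct, Gamma, thetaTildeK, ite_div, ite_mul]

section Positivity

variable {g : Fin n → Fin K} {θ : Fin n → ℝ} {P : Matrix (Fin K) (Fin K) ℝ} {δ d : ℝ}
  (hg : Surjective g) (hθ : ∀ i, 0 < θ i) (hPnn : ∀ k l, 0 ≤ P k l) (hPdet : P.det ≠ 0)
  (hδ : 0 < δ) (hd : 0 < d)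
include hg hθ hPnn hPdet

lemma DPvec_pos (k : Fin K) : 0 < DPvec g θ P k := by
  obtain ⟨l, hl⟩ := exists_pos_of_det_ne_zero hPnn hPdet k
  obtain ⟨j, rfl⟩ := hg l
  rw [DPvec_apply]
  exact Finset.sum_pos' (fun j _ => mul_nonneg (hPnn _ _) (hθ j).le)
    ⟨j, Finset.mem_univ j, mul_pos hl (hθ j)⟩

include hδ hd

lemma thetaTilde_pos (i : Fin n) : 0 < thetaTilde g θ P δ d i := by
  have hD : 0 < Dvec g θ P i := by
    rw [Dvec_eq_mul_DPvec]
    exact mul_pos (hθ i) (DPvec_pos hg hθ hPnn hPdet _)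
  exact Real.sqrt_pos.2 (div_pos (mul_pos (hθ i) hD) (by positivity))

lemma normE_thetaTilde_pos [Nonempty (Fin n)] : 0 < normE (thetaTilde g θ P δ d) :=
  normE_pos (Function.ne_iff.2
    ⟨Classical.arbitrary _, (thetaTilde_pos hg hθ hPnn hPdet hδ hd _).ne'⟩)

lemma normE_thetaTildeK_pos (k : Fin K) : 0 < normE (thetaTildeK g θ P δ d k) := by
  obtain ⟨i, rfl⟩ := hg k
  refine normE_pos (Function.ne_iff.2 ⟨i, ?_⟩)
  simpa [thetaTildeK] using (thetaTilde_pos hg hθ hPnn hPdet hδ hd i).ne'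

lemma Dtilde_diag_pos (k : Fin K) :
    0 < normE (thetaTildeK g θ P δ d k) / normE (thetaTilde g θ P δ d) :=
  have : Nonempty (Fin n) := hg.nonempty (h := ⟨k⟩)
  div_pos (normE_thetaTildeK_pos hg hθ hPnn hPdet hδ hd k)
    (normE_thetaTilde_pos hg hθ hPnn hPdet hδ hd)

lemma det_Dtilde_mul_Ptilde_mul_Dtilde_ne_zero :
    (Dtilde g θ P δ d * Ptilde g θ P * Dtilde g θ P δ d).det ≠ 0 := by
  have hD : (Dtilde g θ P δ d).det ≠ 0 := by
    rw [Dtilde, det_diagonal]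
    exact Finset.prod_ne_zero_iff.2 fun k _ => (Dtilde_diag_pos hg hθ hPnn hPdet hδ hd k).ne'
  have hS : (diagonal fun k => (Real.sqrt (DPvec g θ P k))⁻¹).det ≠ 0 := by
    rw [det_diagonal]
    exact Finset.prod_ne_zero_iff.2 fun k _ =>
      inv_ne_zero (Real.sqrt_pos.2 (DPvec_pos hg hθ hPnn hPdet k)).ne'
  simp only [Ptilde, det_mul]
  exact mul_ne_zero (mul_ne_zero hD (mul_ne_zero (mul_ne_zero hS hPdet) hS)) hD

end Positivity

/-- Row `k` of the `K × (K + 1)` matrix `[λ₁a₁, …, λ_Ka_K, 0]`, the `a_j` taken as columns. -/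
def eigenRow (lam : Fin K → ℝ) (a : Fin K → Fin K → ℝ) (k : Fin K) : Fin (K + 1) → ℝ :=
  fun j => if h : (j : ℕ) < K then a ⟨j, h⟩ k * lam ⟨j, h⟩ else 0

lemma linearIndependent_eigenRow {lam : Fin K → ℝ} {a : Fin K → Fin K → ℝ}
    (ha : LinearIndependent ℝ a) (hlam : ∀ j, lam j ≠ 0) :
    LinearIndependent ℝ (eigenRow lam a) := by
  have hrestrict : LinearMap.funLeft ℝ ℝ Fin.castSucc ∘ eigenRow lam a =
      fun k j => a j k * lam j := by
    funext k j
    simp [eigenRow]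
  refine .of_comp (LinearMap.funLeft ℝ ℝ Fin.castSucc) ?_
  rw [hrestrict]
  exact linearIndependent_transpose_mul_diagonal ha hlam

lemma row_eq_smul_eigenRow {g : Fin n → Fin K} {θ : Fin n → ℝ} {P : Matrix (Fin K) (Fin K) ℝ}
    {δ d : ℝ} {lam : Fin K → ℝ} {a : Fin K → Fin K → ℝ} {X : Matrix (Fin n) (Fin (K + 1)) ℝ}
    (hX : ∀ (i : Fin n) (j : Fin (K + 1)), X i j =
      if h : (j : ℕ) < K then lam ⟨j, h⟩ * ((Gamma g θ P δ d) *ᵥ a ⟨j, h⟩) i else 0)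
    (i : Fin n) :
    X i = (thetaTilde g θ P δ d i / normE (thetaTildeK g θ P δ d (g i))) •
      eigenRow lam a (g i) := by
  funext j
  simp only [hX, Gamma_mulVec_apply, eigenRow, Pi.smul_apply, smul_eq_mul]
  split_ifs <;> ring

theorem stmt8_general {n K : ℕ}
    (g : Fin n → Fin K) (hg : Function.Surjective g)
    (θ : Fin n → ℝ) (hθ : ∀ i, 0 < θ i)
    (P : Matrix (Fin K) (Fin K) ℝ) (hPdet : P.det ≠ 0)
    (hPnn : ∀ k l, 0 ≤ P k l)
    (δ d : ℝ) (hδ : 0 < δ) (hd : 0 < d)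
    (lam : Fin K → ℝ) (a : Fin K → Fin K → ℝ)
    (heig : ∀ j, (Dtilde g θ P δ d * Ptilde g θ P * Dtilde g θ P δ d) *ᵥ a j =
      (lam j / (normE (thetaTilde g θ P δ d)) ^ 2) • a j)
    (haunit : ∀ j, normE (a j) = 1)
    (hsimple : Function.Injective lam)
    (X : Matrix (Fin n) (Fin (K + 1)) ℝ)
    (hX : ∀ (i : Fin n) (j : Fin (K + 1)), X i j =
      if h : (j : ℕ) < K then lam ⟨j, h⟩ * ((Gamma g θ P δ d) *ᵥ a ⟨j, h⟩) i else 0) :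
    (∀ i i' : Fin n, g i ≠ g i' →
        (fun j => X i j / normE (X i)) ≠ (fun j => X i' j / normE (X i'))) ∧
      Set.ncard (Set.range fun i : Fin n => fun j => X i j / normE (X i)) = K := by
  have hB := det_Dtilde_mul_Ptilde_mul_Dtilde_ne_zero hg hθ hPnn hPdet hδ hd
  have ha : ∀ j, a j ≠ 0 := fun j h => by simpa [h, normE_zero] using haunit j
  have hlam : ∀ j, lam j ≠ 0 := fun j =>
    (div_ne_zero_iff.1 (eigenvalue_ne_zero_of_det_ne_zero hB (ha j) (heig j))).1
  have hμ : Injective fun j => lam j / normE (thetaTilde g θ P δ d) ^ 2 := fun j _ h =>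
    have : Nonempty (Fin n) := hg.nonempty (h := ⟨j⟩)
    hsimple ((div_left_inj' (pow_pos (normE_thetaTilde_pos hg hθ hPnn hPdet hδ hd) 2).ne').1 h)
  let v : Fin K → Fin (K + 1) → ℝ := fun k => (normE (eigenRow lam a k))⁻¹ • eigenRow lam a k
  have hv : Injective v := injective_inv_normE_smul
    (linearIndependent_eigenRow (linearIndependent_of_mulVec_eq_smul _ hμ ha heig) hlam)
  have hrow : ∀ i, (fun j => X i j / normE (X i)) = v (g i) := fun i => by
    rw [row_eq_smul_eigenRow hX]
    exact div_normE_smul_of_pos (div_pos (thetaTilde_pos hg hθ hPnn hPdet hδ hd i)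
      (normE_thetaTildeK_pos hg hθ hPnn hPdet hδ hd _)) _
  refine ⟨fun i i' hne h => hne (hv (by rw [← hrow, ← hrow, h])), ?_⟩
  rw [show (fun i => fun j => X i j / normE (X i)) = v ∘ g from funext hrow, Set.range_comp,
    hg.range_eq, Set.image_univ, Set.ncard_range_of_injective hv, Nat.card_fin]

/-- Rows of the row-normalized matrix `X*` corresponding to different communities are
different; consequently `X*` has exactly `K` distinct rows. -/
theorem stmt8 {n K : ℕ} (hK : 1 ≤ K) (hKn : K ≤ n)
    (g : Fin n → Fin K) (hg : Function.Surjective g)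
    (θ : Fin n → ℝ) (hθ : ∀ i, 0 < θ i)
    (P : Matrix (Fin K) (Fin K) ℝ) (hPsymm : P.IsSymm) (hPdet : P.det ≠ 0)
    (hPnn : ∀ k l, 0 ≤ P k l)
    (δ d : ℝ) (hδ : 0 < δ) (hd : 0 < d)
    (lam : Fin K → ℝ) (a : Fin K → Fin K → ℝ)
    (heig : ∀ j, (Dtilde g θ P δ d * Ptilde g θ P * Dtilde g θ P δ d) *ᵥ a j =
      (lam j / (normE (thetaTilde g θ P δ d)) ^ 2) • a j)
    (haunit : ∀ j, normE (a j) = 1)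
    (hdesc : ∀ j j' : Fin K, j ≤ j' → |lam j'| ≤ |lam j|)
    (hsimple : Function.Injective lam)
    (X : Matrix (Fin n) (Fin (K + 1)) ℝ)
    (hX : ∀ (i : Fin n) (j : Fin (K + 1)), X i j =
      if h : (j : ℕ) < K then lam ⟨j, h⟩ * ((Gamma g θ P δ d) *ᵥ a ⟨j, h⟩) i else 0) :
    (∀ i i' : Fin n, g i ≠ g i' →
        (fun j => X i j / normE (X i)) ≠ (fun j => X i' j / normE (X i'))) ∧
      Set.ncard (Set.range fun i : Fin n => fun j => X i j / normE (X i)) = K :=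
  stmt8_general g hg θ hθ P hPdet hPnn δ d hδ hd lam a heig haunit hsimple X hX

end DCSBM
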